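/- Let X₀ be an n×d real matrix, and let (A; B) be a full-rank (n+d)×d block matrix (A is n×d, B is d×d). If the largest sine of canonical angles between col((A;B)) and col((X₀;−I_d)) is strictly less than 1/√(1+‖X₀‖²), then B is nonsingular. -/

import Mathlib

/-!
If `B` is singular, pick `c ≠ 0` with `B c = 0`; full rank makes `v = (A c; 0)` a nonzero vector of
`col((A;B))`. Every vector of `col((X₀;−I))` has the form `(X₀ y; −y)`, and
`‖A c‖ ≤ ‖A c − X₀ y‖ + ‖X₀‖ ‖y‖ ≤ √(1 + ‖X₀‖²) ‖v − (X₀ y; −y)‖` by Cauchy–Schwarz, so the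
distance from `v` to `col((X₀;−I))` is at least `‖v‖ / √(1 + ‖X₀‖²)`. On the other hand that
distance is `‖(I − P₂) P₁ v‖ ≤ ‖sin∠‖ ‖v‖`, since `(I − P₂) P₁` is the adjoint of `P₁ (I − P₂)`.
-/

noncomputable section
open Matrix

/-- Spectral (operator 2-) norm of a real matrix. -/
noncomputable def specNorm {m n : ℕ} (M : Matrix (Fin m) (Fin n) ℝ) : ℝ :=
  ‖LinearMap.toContinuousLinearMap (Matrix.toEuclideanLin M)‖

/-- Orthogonal projector onto a subspace, as a continuous linear map on the whole space. -/
noncomputable def projCLM {ι : Type*} [Fintype ι] (W : Submodule ℝ (EuclideanSpace ℝ ι)) :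
    EuclideanSpace ℝ ι →L[ℝ] EuclideanSpace ℝ ι :=
  W.subtypeL.comp (W.orthogonalProjection)

/-- ‖sin∠(V,W)‖ = ‖P_V (I − P_W)‖, the largest sine of canonical angles. -/
noncomputable def sinAngle {ι : Type*} [Fintype ι]
    (V W : Submodule ℝ (EuclideanSpace ℝ ι)) : ℝ :=
  ‖(projCLM V).comp (ContinuousLinearMap.id ℝ (EuclideanSpace ℝ ι) - projCLM W)‖

/-- Column space of a matrix, as a subspace of Euclidean space. -/
noncomputable def colSpaceE {ι κ : Type*} [Fintype ι] [Fintype κ] [DecidableEq κ]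
    (M : Matrix ι κ ℝ) : Submodule ℝ (EuclideanSpace ℝ ι) :=
  LinearMap.range (Matrix.toEuclideanLin M)

open WithLp

lemma norm_sub_projCLM_le_sinAngle_mul {ι : Type*} [Fintype ι]
    {V : Submodule ℝ (EuclideanSpace ℝ ι)} (W : Submodule ℝ (EuclideanSpace ℝ ι))
    {v : EuclideanSpace ℝ ι} (hv : v ∈ V) : ‖v - projCLM W v‖ ≤ sinAngle V W * ‖v‖ := by
  set T := (projCLM V).comp (ContinuousLinearMap.id ℝ (EuclideanSpace ℝ ι) - projCLM W)
  have hP (U : Submodule ℝ (EuclideanSpace ℝ ι)) : IsSelfAdjoint (projCLM U) :=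
    isSelfAdjoint_starProjection U
  -- `T† = (I - P_W) P_V` sends `v ∈ V` to `v - P_W v`, and `‖T†‖ = ‖T‖`.
  have hadjoint : ContinuousLinearMap.adjoint T
      = (ContinuousLinearMap.id ℝ (EuclideanSpace ℝ ι) - projCLM W).comp (projCLM V) := by
    rw [ContinuousLinearMap.adjoint_comp, map_sub, ContinuousLinearMap.adjoint_id,
      (hP V).adjoint_eq, (hP W).adjoint_eq]
  have hV : projCLM V v = v := Submodule.starProjection_eq_self_iff.mpr hv
  calc ‖v - projCLM W v‖ = ‖ContinuousLinearMap.adjoint T v‖ := by simp [hadjoint, hV]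
    _ ≤ ‖ContinuousLinearMap.adjoint T‖ * ‖v‖ := ContinuousLinearMap.le_opNorm _ v
    _ = sinAngle V W * ‖v‖ := by rw [LinearIsometryEquiv.norm_map]; rfl

lemma EuclideanSpace.norm_toLp_sumElim_sq {ι κ : Type*} [Fintype ι] [Fintype κ]
    (f : ι → ℝ) (g : κ → ℝ) :
    ‖toLp 2 (Sum.elim f g)‖ ^ 2 = ‖toLp 2 f‖ ^ 2 + ‖toLp 2 g‖ ^ 2 := by
  simp [EuclideanSpace.real_norm_sq_eq, Fintype.sum_sum_type]

lemma EuclideanSpace.norm_toLp_sumElim_zero {ι κ : Type*} [Fintype ι] [Fintype κ]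
    (f : ι → ℝ) : ‖toLp 2 (Sum.elim f (0 : κ → ℝ))‖ = ‖toLp 2 f‖ := by
  rw [← sq_eq_sq₀ (norm_nonneg _) (norm_nonneg _), norm_toLp_sumElim_sq]
  simp

lemma norm_toEuclideanLin_le_specNorm_mul {m n : ℕ} (M : Matrix (Fin m) (Fin n) ℝ)
    (y : EuclideanSpace ℝ (Fin n)) : ‖toEuclideanLin M y‖ ≤ specNorm M * ‖y‖ :=
  (LinearMap.toContinuousLinearMap (toEuclideanLin M)).le_opNorm y

lemma norm_le_mul_norm_sub_of_mem_colSpaceE_fromRows_neg_one {n d : ℕ}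
    (X : Matrix (Fin n) (Fin d) ℝ) (u : Fin n → ℝ) {w : EuclideanSpace ℝ (Fin n ⊕ Fin d)}
    (hw : w ∈ colSpaceE (fromRows X (-1))) :
    ‖toLp 2 u‖ ≤ √(1 + specNorm X ^ 2) * ‖toLp 2 (Sum.elim u 0) - w‖ := by
  obtain ⟨y, rfl⟩ := hw
  set a := ‖toLp 2 (u - X *ᵥ ofLp y)‖
  set σ := specNorm X
  have hdiff : toLp 2 (Sum.elim u 0) - toEuclideanLin (fromRows X (-1)) y
      = toLp 2 (Sum.elim (u - X *ᵥ ofLp y) (ofLp y)) := by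
    ext (i | j) <;> simp [toLpLin_apply, fromRows_mulVec, neg_mulVec]
  have htriangle : ‖toLp 2 u‖ ≤ a + σ * ‖y‖ := by
    calc ‖toLp 2 u‖ = ‖toLp 2 (u - X *ᵥ ofLp y) + toEuclideanLin X y‖ := by
          rw [toLpLin_apply, ← toLp_add, sub_add_cancel]
      _ ≤ a + σ * ‖y‖ := by
          linarith [norm_add_le (toLp 2 (u - X *ᵥ ofLp y)) (toEuclideanLin X y),
            norm_toEuclideanLin_le_specNorm_mul X y]
  have hnorm_sq : ‖toLp 2 (Sum.elim (u - X *ᵥ ofLp y) (ofLp y))‖ ^ 2 = a ^ 2 + ‖y‖ ^ 2 := by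
    rw [EuclideanSpace.norm_toLp_sumElim_sq, toLp_ofLp]
  rw [hdiff]
  refine le_of_pow_le_pow_left₀ two_ne_zero (by positivity) ?_
  rw [mul_pow, Real.sq_sqrt (by positivity), hnorm_sq]
  -- Cauchy–Schwarz: `(a + σ t)² ≤ (1 + σ²)(a² + t²)`.
  have hσ : 0 ≤ σ := norm_nonneg _
  nlinarith [sq_nonneg (a * σ - ‖y‖), norm_nonneg (toLp 2 u), norm_nonneg y]

lemma Matrix.mulVec_injective_of_rank_eq_card {m n K : Type*} [Fintype n] [Field K]
    (M : Matrix m n K) (h : M.rank = Fintype.card n) : Function.Injective M.mulVec := by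
  rw [← Matrix.coe_mulVecLin, ← LinearMap.ker_eq_bot, ← Submodule.finrank_eq_zero (R := K)]
  have := LinearMap.finrank_range_add_finrank_ker M.mulVecLin
  rw [Module.finrank_fintype_fun_eq_card] at this
  rw [Matrix.rank] at h
  omega

/-- If the largest sine of canonical angles between col((A;B)) and col((X₀;−I)) is less
than 1/√(1+‖X₀‖²), then the lower block B is nonsingular. -/
theorem lower_block_nonsingular {n d : ℕ}
    (X₀ A : Matrix (Fin n) (Fin d) ℝ) (B : Matrix (Fin d) (Fin d) ℝ)
    (hrank : (Matrix.fromRows A B).rank = d)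
    (hsin : sinAngle (colSpaceE (Matrix.fromRows A B))
        (colSpaceE (Matrix.fromRows X₀ (-1 : Matrix (Fin d) (Fin d) ℝ)))
      < 1 / Real.sqrt (1 + specNorm X₀ ^ 2)) :
    IsUnit B.det := by
  rw [isUnit_iff_ne_zero]
  intro hdet
  obtain ⟨c, hc, hBc⟩ := Matrix.exists_mulVec_eq_zero_iff.mpr hdet
  set W := colSpaceE (fromRows X₀ (-1 : Matrix (Fin d) (Fin d) ℝ))
  set s := √(1 + specNorm X₀ ^ 2)
  have hMc : fromRows A B *ᵥ c = Sum.elim (A *ᵥ c) 0 := by rw [fromRows_mulVec, hBc]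
  set v := toLp 2 (Sum.elim (A *ᵥ c) 0)
  have hvV : v ∈ colSpaceE (fromRows A B) := ⟨toLp 2 c, by rw [toLpLin_apply, ofLp_toLp, hMc]⟩
  have hv0 : 0 < ‖v‖ := by
    have hinj := (fromRows A B).mulVec_injective_of_rank_eq_card (by rw [hrank, Fintype.card_fin])
    refine norm_pos_iff.mpr fun h0 => hc (hinj ?_)
    rw [hMc, mulVec_zero]
    exact (toLp_eq_zero 2).mp h0
  have hlower : ‖v‖ ≤ s * ‖v - projCLM W v‖ := by
    rw [EuclideanSpace.norm_toLp_sumElim_zero]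
    exact norm_le_mul_norm_sub_of_mem_colSpaceE_fromRows_neg_one X₀ (A *ᵥ c)
      (W.starProjection_apply_mem v)
  have hsin' : s * sinAngle (colSpaceE (fromRows A B)) W < 1 := by
    rwa [lt_div_iff₀ (Real.sqrt_pos.mpr (by positivity)), mul_comm] at hsin
  refine lt_irrefl ‖v‖ ?_
  calc ‖v‖ ≤ s * ‖v - projCLM W v‖ := hlower
    _ ≤ s * (sinAngle (colSpaceE (fromRows A B)) W * ‖v‖) := by
        gcongr
        exact norm_sub_projCLM_le_sinAngle_mul W hvV
    _ < 1 * ‖v‖ := by rw [← mul_assoc]; gcongr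
    _ = ‖v‖ := one_mul _
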